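/- Let n ≥ 3, let θ : Fin n → ℝ and p : Fin n × Fin n → [0,1], and consider the Bernoulli-Plackett-Luce model with edge indicators a_{ij}. Fix an index j, a vector x ∈ ℝⁿ, real weights w_{ij} for i ≠ j, a bias b_j ∈ ℝ, and a scale σ_j > 0. Then the expectation over the Bernoulli-Plackett-Luce model of the Gaussian log-density log N(x_j | μ_j, σ_j²), where μ_j = b_j + Σ_{i ≠ j} a_{ij} w_{ij} x_i and log N(y|μ,σ²) = −½(log(2πσ²) + (y−μ)²/σ²), equals −½ · [ log(2πσ_j²) + (1/σ_j²) · ( (x_j − b_j − Σ_{i ≠ j} E[a_{ij}] w_{ij} x_i)² + Σ_{i ≠ j} E[a_{ij}](1 − E[a_{ij}]) w_{ij}² x_i² + Σ_{i ≠ j} Σ_{k ≠ j, k ≠ i} (E[a_{ij}] w_{ij} x_i)(E[a_{kj}] w_{kj} x_k) · exp(θ_j)/(exp(θ_i)+exp(θ_j)+exp(θ_k)) ) ], where E[a_{ij}] = p_{ij} · exp(θ_i)/(exp(θ_i)+exp(θ_j)). -/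

import Mathlib

open Finset

/-- The Plackett-Luce probability of a permutation `π` of `{1,…,n}` with logits `θ`. -/
noncomputable def plackettLuce {n : ℕ} (θ : Fin n → ℝ) (π : Equiv.Perm (Fin n)) : ℝ :=
  ∏ k : Fin n,
    Real.exp (θ (π k)) / ∑ u ∈ Finset.univ.filter (fun u => k ≤ u), Real.exp (θ (π u))

/-- Joint probability of a `(permutation, edge mask)` sample under the
Bernoulli-Plackett-Luce model. -/
noncomputable def bplProb {n : ℕ} (θ : Fin n → ℝ) (p : Fin n → Fin n → ℝ)
    (ω : Equiv.Perm (Fin n) × (Fin n → Fin n → Bool)) : ℝ :=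
  plackettLuce θ ω.1 * ∏ i : Fin n, ∏ j : Fin n, (if ω.2 i j then p i j else 1 - p i j)

/-- The edge indicator `a_{ij} = b_{ij} · 1[π⁻¹(i) < π⁻¹(j)]`. -/
def bplEdge {n : ℕ} (i j : Fin n)
    (ω : Equiv.Perm (Fin n) × (Fin n → Fin n → Bool)) : ℝ :=
  if ω.2 i j ∧ ω.1.symm i < ω.1.symm j then 1 else 0

/-- The expected edge probability `E[a_{ij}] = p_{ij} · e^{θ_i}/(e^{θ_i}+e^{θ_j})`. -/
noncomputable def bplEdgeExp {n : ℕ} (θ : Fin n → ℝ) (p : Fin n → Fin n → ℝ)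
    (i j : Fin n) : ℝ :=
  p i j * (Real.exp (θ i) / (Real.exp (θ i) + Real.exp (θ j)))

/-!
The expected log-density is affine in the expected squared residual `E[(C - ∑ᵢ aᵢⱼ cᵢ)²]`
(with `C = x_j - b_j`, `cᵢ = wᵢⱼ xᵢ`), which equals `(C - ∑ᵢ E[aᵢⱼ] cᵢ)²` plus the variances and
covariances of the edge indicators. Each `aᵢⱼ` is the product of a Bernoulli mask bit and an
order indicator, which are independent. Under Plackett-Luce, `j` precedes every element of a set
`S ∋ j` with probability `e^{θⱼ} / ∑_{s ∈ S} e^{θₛ}` (condition on the item placed first); by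
inclusion-exclusion this gives `P(i ≺ j)` and `P(i ≺ j, k ≺ j)`, and hence the covariance `E[aᵢⱼ] E[aₖⱼ] e^{θⱼ} / (e^{θᵢ} + e^{θⱼ} + e^{θₖ})`.
-/

lemma Finset.sum_sum_eq_sum_add_sum_sum_erase {ι M : Type*} [AddCommMonoid M] [DecidableEq ι]
    (s : Finset ι) (f : ι → ι → M) :
    ∑ i ∈ s, ∑ k ∈ s, f i k = ∑ i ∈ s, f i i + ∑ i ∈ s, ∑ k ∈ s.erase i, f i k := by
  rw [← Finset.sum_add_distrib]
  exact Finset.sum_congr rfl fun i hi => (Finset.add_sum_erase s (f i) hi).symm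

section Moments

variable {Ω ι : Type*} [Fintype Ω] (P : Ω → ℝ)

lemma sum_mul_sum_mul (s : Finset ι) (a : ι → Ω → ℝ) (c : ι → ℝ) :
    ∑ ω, P ω * ∑ i ∈ s, a i ω * c i = ∑ i ∈ s, (∑ ω, P ω * a i ω) * c i := by
  simp only [Finset.mul_sum, Finset.sum_mul, ← mul_assoc]
  exact Finset.sum_comm

lemma sum_mul_sum_mul_sq (s : Finset ι) (a : ι → Ω → ℝ) (c : ι → ℝ) :
    ∑ ω, P ω * (∑ i ∈ s, a i ω * c i) ^ 2 =
      ∑ i ∈ s, ∑ k ∈ s, (∑ ω, P ω * (a i ω * a k ω)) * (c i * c k) := by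
  simp only [sq, Finset.mul_sum, Finset.sum_mul]
  rw [Finset.sum_comm]
  refine Finset.sum_congr rfl fun i _ => ?_
  rw [Finset.sum_comm]
  refine Finset.sum_congr rfl fun k _ => Finset.sum_congr rfl fun ω _ => by ring

theorem sum_mul_sub_sum_mul_sq (hP : ∑ ω, P ω = 1) (C : ℝ) (s : Finset ι) (a : ι → Ω → ℝ)
    (c : ι → ℝ) :
    ∑ ω, P ω * (C - ∑ i ∈ s, a i ω * c i) ^ 2 =
      (C - ∑ i ∈ s, (∑ ω, P ω * a i ω) * c i) ^ 2 +
        ∑ i ∈ s, ∑ k ∈ s, (∑ ω, P ω * (a i ω * a k ω) -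
          (∑ ω, P ω * a i ω) * ∑ ω, P ω * a k ω) * (c i * c k) := by
  have hsq : (∑ i ∈ s, (∑ ω, P ω * a i ω) * c i) ^ 2 =
      ∑ i ∈ s, ∑ k ∈ s, (∑ ω, P ω * a i ω) * (∑ ω, P ω * a k ω) * (c i * c k) := by
    rw [sq, Finset.sum_mul_sum]
    refine Finset.sum_congr rfl fun i _ => Finset.sum_congr rfl fun k _ => by ring
  have hexpand : ∑ ω, P ω * (C - ∑ i ∈ s, a i ω * c i) ^ 2 = C ^ 2 * ∑ ω, P ω
      - 2 * C * ∑ ω, P ω * ∑ i ∈ s, a i ω * c i + ∑ ω, P ω * (∑ i ∈ s, a i ω * c i) ^ 2 := by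
    rw [Finset.mul_sum, Finset.mul_sum, ← Finset.sum_sub_distrib, ← Finset.sum_add_distrib]
    exact Finset.sum_congr rfl fun ω _ => by ring
  rw [hexpand, hP, sum_mul_sum_mul, sum_mul_sum_mul_sq, sub_sq, hsq]
  simp only [sub_mul, Finset.sum_sub_distrib]
  ring

end Moments

section Bernoulli

variable {ι : Type*} [Fintype ι] [DecidableEq ι]

theorem sum_prod_bernoulli_mul_prod_boole (q : ι → ℝ) (T : Finset ι) :
    ∑ m : ι → Bool, (∏ t, if m t then q t else 1 - q t) * ∏ t ∈ T, (if m t then 1 else 0) =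
      ∏ t ∈ T, q t := by
  simp_rw [← Finset.prod_ite_mem_eq T, ← Finset.prod_mul_distrib]
  rw [← Fintype.prod_sum fun t (b : Bool) =>
    (if b then q t else 1 - q t) * if t ∈ T then (if b then 1 else 0) else 1]
  refine Finset.prod_congr rfl fun t _ => ?_
  by_cases ht : t ∈ T <;> simp [ht]

theorem sum_prod_prod_bernoulli_mul_prod_boole {α β : Type*} [Fintype α] [DecidableEq α]
    [Fintype β] [DecidableEq β] (q : α → β → ℝ) (T : Finset (α × β)) :
    ∑ m : α → β → Bool, (∏ a, ∏ b, if m a b then q a b else 1 - q a b) *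
        ∏ t ∈ T, (if m t.1 t.2 then 1 else 0) =
      ∏ t ∈ T, q t.1 t.2 := by
  rw [← (Equiv.curry α β Bool).sum_comp]
  simpa only [Equiv.curry_apply, Function.curry_apply, Fintype.prod_prod_type] using
    sum_prod_bernoulli_mul_prod_boole (fun t : α × β => q t.1 t.2) T

end Bernoulli

namespace PlackettLuce

open Equiv Equiv.Perm

variable {m : ℕ}

/-- `decomposeFin.symm (q, e)` places `q` first and the item `tailLabel q (e v)` at position
`v.succ`. -/
def tailLabel (q : Fin (m + 1)) (v : Fin m) : Fin (m + 1) := swap 0 q v.succ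

lemma tailLabel_injective (q : Fin (m + 1)) : Function.Injective (tailLabel q) := fun _ _ h =>
  Fin.succ_injective _ ((swap 0 q).injective h)

lemma mem_range_tailLabel {q u : Fin (m + 1)} (hu : u ≠ q) : u ∈ Set.range (tailLabel q) := by
  have h0 : swap 0 q u ≠ 0 := by simpa [swap_apply_eq_iff] using hu
  exact ⟨(swap 0 q u).pred h0, by simp [tailLabel]⟩

lemma decomposeFin_symm_symm_self (q : Fin (m + 1)) (e : Perm (Fin m)) :
    (decomposeFin.symm (q, e)).symm q = 0 := by
  rw [Equiv.symm_apply_eq, decomposeFin_symm_apply_zero]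

lemma decomposeFin_symm_symm_tailLabel (q : Fin (m + 1)) (e : Perm (Fin m)) (v : Fin m) :
    (decomposeFin.symm (q, e)).symm (tailLabel q v) = (e.symm v).succ := by
  rw [Equiv.symm_apply_eq, decomposeFin_symm_apply_succ, apply_symm_apply, tailLabel]

lemma plackettLuce_decomposeFin_symm (θ : Fin (m + 1) → ℝ) (q : Fin (m + 1)) (e : Perm (Fin m)) :
    plackettLuce θ (decomposeFin.symm (q, e)) =
      Real.exp (θ q) / (∑ u, Real.exp (θ u)) * plackettLuce (θ ∘ tailLabel q) e := by
  rw [plackettLuce, Fin.prod_univ_succ, plackettLuce]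
  congr 1
  · simp only [Fin.zero_le, Finset.filter_true, decomposeFin_symm_apply_zero]
    rw [Equiv.sum_comp _ fun u => Real.exp (θ u)]
  · refine Finset.prod_congr rfl fun k _ => ?_
    simp only [Finset.sum_filter, Fin.sum_univ_succ, Fin.succ_le_succ_iff, Fin.le_zero_iff,
      Fin.succ_ne_zero, if_false, zero_add, decomposeFin_symm_apply_succ, Function.comp, tailLabel]

lemma forall_le_decomposeFin_symm_iff {q : Fin (m + 1)} {S : Finset (Fin (m + 1))}
    (hS : ∀ s ∈ S, s ∈ Set.range (tailLabel q)) (e : Perm (Fin m)) (j : Fin m) :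
    (∀ s ∈ S, (decomposeFin.symm (q, e)).symm (tailLabel q j) ≤ (decomposeFin.symm (q, e)).symm s)
      ↔ ∀ s ∈ S.preimage (tailLabel q) (tailLabel_injective q).injOn, e.symm j ≤ e.symm s := by
  simp only [decomposeFin_symm_symm_tailLabel]
  constructor
  · intro h s hs
    simpa [decomposeFin_symm_symm_tailLabel] using h _ (Finset.mem_preimage.mp hs)
  · intro h s hs
    obtain ⟨s, rfl⟩ := hS s hs
    simpa [decomposeFin_symm_symm_tailLabel] using h s (Finset.mem_preimage.mpr hs)

lemma sum_exp_pos (θ : Fin (m + 1) → ℝ) : 0 < ∑ u, Real.exp (θ u) :=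
  Finset.sum_pos (fun _ _ => Real.exp_pos _) Finset.univ_nonempty

lemma sum_plackettLuce_mul (θ : Fin (m + 1) → ℝ) (f : Perm (Fin (m + 1)) → ℝ) :
    ∑ π, plackettLuce θ π * f π = ∑ q, Real.exp (θ q) / (∑ u, Real.exp (θ u)) *
      ∑ e, plackettLuce (θ ∘ tailLabel q) e * f (decomposeFin.symm (q, e)) := by
  rw [← decomposeFin.symm.sum_comp, Fintype.sum_prod_type]
  simp only [plackettLuce_decomposeFin_symm, Finset.mul_sum, mul_assoc]

theorem sum_plackettLuce {n : ℕ} (θ : Fin n → ℝ) : ∑ π, plackettLuce θ π = 1 := by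
  induction n with
  | zero => simp [plackettLuce]
  | succ n ih =>
    simpa [ih, ← Finset.sum_div, (sum_exp_pos θ).ne'] using sum_plackettLuce_mul θ fun _ => 1

lemma sum_exp_div_mul_ite_mem (θ : Fin (m + 1) → ℝ) (S : Finset (Fin (m + 1))) {j : Fin (m + 1)}
    (hj : j ∈ S) :
    ∑ q, Real.exp (θ q) / (∑ u, Real.exp (θ u)) *
        (if q ∈ S then (if j = q then 1 else 0) else Real.exp (θ j) / ∑ s ∈ S, Real.exp (θ s)) =
      Real.exp (θ j) / ∑ s ∈ S, Real.exp (θ s) := by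
  have hZ : 0 < ∑ s ∈ S, Real.exp (θ s) := Finset.sum_pos (fun _ _ => Real.exp_pos _) ⟨j, hj⟩
  have hT := sum_exp_pos θ
  have hcompl : ∑ q ∈ Sᶜ, Real.exp (θ q) = ∑ u, Real.exp (θ u) - ∑ s ∈ S, Real.exp (θ s) :=
    eq_sub_of_add_eq (S.sum_compl_add_sum _)
  rw [← S.sum_add_sum_compl, Finset.sum_congr rfl fun q hq => congrArg _ (if_pos hq),
    Finset.sum_congr rfl fun q hq => congrArg _ (if_neg (Finset.mem_compl.mp hq)),
    Finset.sum_mul_boole, if_pos hj, ← Finset.sum_mul, ← Finset.sum_div, hcompl]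
  field_simp
  ring

theorem sum_plackettLuce_mul_ite_forall_le {n : ℕ} (θ : Fin n → ℝ) (S : Finset (Fin n))
    {j : Fin n} (hj : j ∈ S) :
    ∑ π, plackettLuce θ π * (if ∀ s ∈ S, π.symm j ≤ π.symm s then 1 else 0) =
      Real.exp (θ j) / ∑ s ∈ S, Real.exp (θ s) := by
  induction n with
  | zero => exact j.elim0
  | succ n ih =>
    -- Condition on the item `q` placed first: the event holds if `q = j`, fails if
    -- `q ∈ S \ {j}`, and otherwise is the same event for the remaining items.
    have inner : ∀ q, ∑ e, plackettLuce (θ ∘ tailLabel q) e *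
        (if ∀ s ∈ S, (decomposeFin.symm (q, e)).symm j ≤ (decomposeFin.symm (q, e)).symm s
          then 1 else 0) =
        if q ∈ S then (if j = q then 1 else 0) else Real.exp (θ j) / ∑ s ∈ S, Real.exp (θ s) := by
      intro q
      split_ifs with hqS hjq
      · subst hjq
        simp only [decomposeFin_symm_symm_self, Fin.zero_le, implies_true, if_true, mul_one]
        exact sum_plackettLuce _
      · refine Finset.sum_eq_zero fun e _ => ?_
        rw [if_neg, mul_zero]
        intro h
        have h0 := h q hqS
        rw [decomposeFin_symm_symm_self, Fin.le_zero_iff, ← decomposeFin_symm_symm_self q e] at h0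
        exact hjq ((decomposeFin.symm (q, e)).symm.injective h0)
      · have hrange : ∀ s ∈ S, s ∈ Set.range (tailLabel q) :=
          fun s hs => mem_range_tailLabel (ne_of_mem_of_not_mem hs hqS)
        obtain ⟨j', rfl⟩ := hrange j hj
        simp_rw [forall_le_decomposeFin_symm_iff hrange]
        rw [ih (θ ∘ tailLabel q) _ (Finset.mem_preimage.mpr hj)]
        exact congrArg _ (Finset.sum_preimage _ S _ (fun s => Real.exp (θ s))
          fun s hs hs' => (hs' (hrange s hs)).elim)
    rw [sum_plackettLuce_mul]
    simp only [inner]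
    exact sum_exp_div_mul_ite_mem θ S hj

lemma ite_lt_eq_one_sub {n : ℕ} (π : Perm (Fin n)) (i j : Fin n) :
    (if π.symm i < π.symm j then (1 : ℝ) else 0) =
      1 - if ∀ s ∈ ({i, j} : Finset (Fin n)), π.symm j ≤ π.symm s then 1 else 0 := by
  by_cases h : π.symm i < π.symm j
  · simp [h, h.not_ge]
  · simp [h, not_lt.mp h]

theorem sum_plackettLuce_mul_ite_lt {n : ℕ} (θ : Fin n → ℝ) {i j : Fin n} (hij : i ≠ j) :
    ∑ π, plackettLuce θ π * (if π.symm i < π.symm j then 1 else 0) =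
      Real.exp (θ i) / (Real.exp (θ i) + Real.exp (θ j)) := by
  simp only [ite_lt_eq_one_sub, mul_sub, mul_one, Finset.sum_sub_distrib, sum_plackettLuce]
  rw [sum_plackettLuce_mul_ite_forall_le θ {i, j} (by simp), Finset.sum_pair hij]
  have := Real.exp_pos (θ i)
  have := Real.exp_pos (θ j)
  field_simp
  ring

lemma ite_lt_mul_ite_lt {n : ℕ} (π : Perm (Fin n)) (i k j : Fin n) :
    (if π.symm i < π.symm j then (1 : ℝ) else 0) * (if π.symm k < π.symm j then 1 else 0) =
      1 - (if ∀ s ∈ ({i, j} : Finset (Fin n)), π.symm j ≤ π.symm s then 1 else 0)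
        - (if ∀ s ∈ ({k, j} : Finset (Fin n)), π.symm j ≤ π.symm s then 1 else 0)
        + (if ∀ s ∈ ({i, k, j} : Finset (Fin n)), π.symm j ≤ π.symm s then 1 else 0) := by
  simp only [ite_lt_eq_one_sub, Finset.mem_insert, Finset.mem_singleton, forall_eq_or_imp,
    forall_eq, le_refl, and_true]
  split_ifs <;> simp_all

theorem sum_plackettLuce_mul_ite_lt_mul_ite_lt {n : ℕ} (θ : Fin n → ℝ) {i k j : Fin n}
    (hij : i ≠ j) (hkj : k ≠ j) (hik : i ≠ k) :
    ∑ π, plackettLuce θ π *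
        ((if π.symm i < π.symm j then 1 else 0) * (if π.symm k < π.symm j then 1 else 0)) =
      Real.exp (θ i) / (Real.exp (θ i) + Real.exp (θ j)) *
        (Real.exp (θ k) / (Real.exp (θ k) + Real.exp (θ j))) *
        (1 + Real.exp (θ j) / (Real.exp (θ i) + Real.exp (θ j) + Real.exp (θ k))) := by
  simp only [ite_lt_mul_ite_lt, mul_add, mul_sub, mul_one, Finset.sum_add_distrib,
    Finset.sum_sub_distrib, sum_plackettLuce]
  rw [sum_plackettLuce_mul_ite_forall_le θ {i, j} (by simp),
    sum_plackettLuce_mul_ite_forall_le θ {k, j} (by simp),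
    sum_plackettLuce_mul_ite_forall_le θ {i, k, j} (by simp), Finset.sum_pair hij,
    Finset.sum_pair hkj, Finset.sum_insert (by simp [hik, hij]), Finset.sum_pair hkj]
  have := Real.exp_pos (θ i)
  have := Real.exp_pos (θ j)
  have := Real.exp_pos (θ k)
  field_simp
  ring

end PlackettLuce

section BernoulliPlackettLuce

open PlackettLuce

variable {n : ℕ} (θ : Fin n → ℝ) (p : Fin n → Fin n → ℝ)

lemma sum_bplProb_mul_mul (f : Equiv.Perm (Fin n) → ℝ) (T : Finset (Fin n × Fin n)) :
    ∑ ω, bplProb θ p ω * (f ω.1 * ∏ t ∈ T, if ω.2 t.1 t.2 then 1 else 0) =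
      (∑ π, plackettLuce θ π * f π) * ∏ t ∈ T, p t.1 t.2 := by
  rw [Fintype.sum_prod_type, ← sum_prod_prod_bernoulli_mul_prod_boole p T, Finset.sum_mul_sum]
  refine Finset.sum_congr rfl fun π _ => Finset.sum_congr rfl fun m _ => ?_
  rw [bplProb]
  ring

theorem sum_bplProb : ∑ ω, bplProb θ p ω = 1 := by
  simpa [sum_plackettLuce] using sum_bplProb_mul_mul θ p (fun _ => 1) ∅

lemma bplEdge_eq (i j : Fin n) (ω : Equiv.Perm (Fin n) × (Fin n → Fin n → Bool)) :
    bplEdge i j ω = (if ω.1.symm i < ω.1.symm j then 1 else 0) * if ω.2 i j then 1 else 0 := by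
  by_cases h : ω.2 i j <;> simp [bplEdge, h]

theorem sum_bplProb_mul_bplEdge {i j : Fin n} (hij : i ≠ j) :
    ∑ ω, bplProb θ p ω * bplEdge i j ω = bplEdgeExp θ p i j := by
  calc ∑ ω, bplProb θ p ω * bplEdge i j ω
      = ∑ ω, bplProb θ p ω * ((if ω.1.symm i < ω.1.symm j then 1 else 0) *
          ∏ t ∈ {(i, j)}, if ω.2 t.1 t.2 then 1 else 0) := by
        simp only [bplEdge_eq, Finset.prod_singleton]
    _ = bplEdgeExp θ p i j := by
        rw [sum_bplProb_mul_mul θ p (fun π => if π.symm i < π.symm j then 1 else 0),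
          sum_plackettLuce_mul_ite_lt θ hij, Finset.prod_singleton,
          bplEdgeExp, mul_comm]

theorem sum_bplProb_mul_bplEdge_mul_bplEdge {i k j : Fin n} (hij : i ≠ j) (hkj : k ≠ j)
    (hik : i ≠ k) :
    ∑ ω, bplProb θ p ω * (bplEdge i j ω * bplEdge k j ω) =
      bplEdgeExp θ p i j * bplEdgeExp θ p k j *
        (1 + Real.exp (θ j) / (Real.exp (θ i) + Real.exp (θ j) + Real.exp (θ k))) := by
  have hpair : (i, j) ≠ (k, j) := by simp [hik]
  calc ∑ ω, bplProb θ p ω * (bplEdge i j ω * bplEdge k j ω)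
      = ∑ ω, bplProb θ p ω * (((if ω.1.symm i < ω.1.symm j then 1 else 0) *
          (if ω.1.symm k < ω.1.symm j then 1 else 0)) *
            ∏ t ∈ {(i, j), (k, j)}, if ω.2 t.1 t.2 then 1 else 0) := by
        refine Finset.sum_congr rfl fun ω _ => ?_
        rw [bplEdge_eq, bplEdge_eq, Finset.prod_pair hpair]
        ring
    _ = _ := by
        rw [sum_bplProb_mul_mul θ p fun π =>
            (if π.symm i < π.symm j then 1 else 0) * (if π.symm k < π.symm j then 1 else 0),
          sum_plackettLuce_mul_ite_lt_mul_ite_lt θ hij hkj hik,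
          Finset.prod_pair hpair, bplEdgeExp, bplEdgeExp]
        ring

lemma bplEdge_mul_self (i j : Fin n) (ω : Equiv.Perm (Fin n) × (Fin n → Fin n → Bool)) :
    bplEdge i j ω * bplEdge i j ω = bplEdge i j ω := by
  rw [bplEdge]
  split_ifs <;> norm_num

theorem bplEdge_variance {i j : Fin n} (hij : i ≠ j) :
    ∑ ω, bplProb θ p ω * (bplEdge i j ω * bplEdge i j ω)
        - (∑ ω, bplProb θ p ω * bplEdge i j ω) * (∑ ω, bplProb θ p ω * bplEdge i j ω) =
      bplEdgeExp θ p i j * (1 - bplEdgeExp θ p i j) := by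
  simp only [bplEdge_mul_self, sum_bplProb_mul_bplEdge θ p hij]
  ring

theorem bplEdge_covariance {i k j : Fin n} (hij : i ≠ j) (hkj : k ≠ j) (hik : i ≠ k) :
    ∑ ω, bplProb θ p ω * (bplEdge i j ω * bplEdge k j ω)
        - (∑ ω, bplProb θ p ω * bplEdge i j ω) * (∑ ω, bplProb θ p ω * bplEdge k j ω) =
      bplEdgeExp θ p i j * bplEdgeExp θ p k j *
        (Real.exp (θ j) / (Real.exp (θ i) + Real.exp (θ j) + Real.exp (θ k))) := by
  rw [sum_bplProb_mul_bplEdge_mul_bplEdge θ p hij hkj hik, sum_bplProb_mul_bplEdge θ p hij,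
    sum_bplProb_mul_bplEdge θ p hkj]
  ring

theorem sum_bplProb_mul_sq_residual (j : Fin n) (x w : Fin n → ℝ) (b : ℝ) :
    ∑ ω, bplProb θ p ω * (x j - (b + ∑ i ∈ Finset.univ.erase j, bplEdge i j ω * w i * x i)) ^ 2 =
      (x j - b - ∑ i ∈ Finset.univ.erase j, bplEdgeExp θ p i j * w i * x i) ^ 2
        + (∑ i ∈ Finset.univ.erase j,
            bplEdgeExp θ p i j * (1 - bplEdgeExp θ p i j) * w i ^ 2 * x i ^ 2)
        + ∑ i ∈ Finset.univ.erase j, ∑ k ∈ (Finset.univ.erase j).erase i,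
            (bplEdgeExp θ p i j * w i * x i) * (bplEdgeExp θ p k j * w k * x k) *
              (Real.exp (θ j) / (Real.exp (θ i) + Real.exp (θ j) + Real.exp (θ k))) := by
  have hs : ∀ i ∈ Finset.univ.erase j, i ≠ j := fun i hi => Finset.ne_of_mem_erase hi
  have hmean : ∑ i ∈ Finset.univ.erase j, (∑ ω, bplProb θ p ω * bplEdge i j ω) * (w i * x i) =
      ∑ i ∈ Finset.univ.erase j, bplEdgeExp θ p i j * w i * x i :=
    Finset.sum_congr rfl fun i hi => by rw [sum_bplProb_mul_bplEdge θ p (hs i hi), mul_assoc]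
  have hvar : ∑ i ∈ Finset.univ.erase j, (∑ ω, bplProb θ p ω * (bplEdge i j ω * bplEdge i j ω)
      - (∑ ω, bplProb θ p ω * bplEdge i j ω) * (∑ ω, bplProb θ p ω * bplEdge i j ω)) *
        (w i * x i * (w i * x i)) =
      ∑ i ∈ Finset.univ.erase j,
        bplEdgeExp θ p i j * (1 - bplEdgeExp θ p i j) * w i ^ 2 * x i ^ 2 :=
    Finset.sum_congr rfl fun i hi => by rw [bplEdge_variance θ p (hs i hi)]; ring
  have hcov : ∑ i ∈ Finset.univ.erase j, ∑ k ∈ (Finset.univ.erase j).erase i,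
      (∑ ω, bplProb θ p ω * (bplEdge i j ω * bplEdge k j ω)
        - (∑ ω, bplProb θ p ω * bplEdge i j ω) * (∑ ω, bplProb θ p ω * bplEdge k j ω)) *
          (w i * x i * (w k * x k)) =
      ∑ i ∈ Finset.univ.erase j, ∑ k ∈ (Finset.univ.erase j).erase i,
        (bplEdgeExp θ p i j * w i * x i) * (bplEdgeExp θ p k j * w k * x k) *
          (Real.exp (θ j) / (Real.exp (θ i) + Real.exp (θ j) + Real.exp (θ k))) :=
    Finset.sum_congr rfl fun i hi => Finset.sum_congr rfl fun k hk => by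
      rw [bplEdge_covariance θ p (hs i hi) (hs k (Finset.mem_of_mem_erase hk))
        (Finset.ne_of_mem_erase hk).symm]
      ring
  have hresidual : ∀ ω, x j - (b + ∑ i ∈ Finset.univ.erase j, bplEdge i j ω * w i * x i) =
      (x j - b) - ∑ i ∈ Finset.univ.erase j, bplEdge i j ω * (w i * x i) := fun ω => by
    simp only [mul_assoc]
    ring
  simp only [hresidual]
  rw [sum_mul_sub_sum_mul_sq _ (sum_bplProb θ p), Finset.sum_sum_eq_sum_add_sum_sum_erase, hmean,
    hvar, hcov, add_assoc]

end BernoulliPlackettLuce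

theorem bpl_expected_gaussian_loglik_general {n : ℕ} (θ : Fin n → ℝ)
    (p : Fin n → Fin n → ℝ)
    (j : Fin n) (x : Fin n → ℝ) (w : Fin n → ℝ) (b σ : ℝ) :
    (∑ ω : Equiv.Perm (Fin n) × (Fin n → Fin n → Bool),
        bplProb θ p ω *
          (-(1 / 2) * (Real.log (2 * Real.pi * σ ^ 2)
            + (x j - (b + ∑ i ∈ Finset.univ.erase j, bplEdge i j ω * w i * x i)) ^ 2
                / σ ^ 2)))
      = -(1 / 2) * (Real.log (2 * Real.pi * σ ^ 2)
          + (1 / σ ^ 2) *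
            ((x j - b - ∑ i ∈ Finset.univ.erase j, bplEdgeExp θ p i j * w i * x i) ^ 2
              + (∑ i ∈ Finset.univ.erase j,
                  bplEdgeExp θ p i j * (1 - bplEdgeExp θ p i j) * w i ^ 2 * x i ^ 2)
              + ∑ i ∈ Finset.univ.erase j, ∑ k ∈ (Finset.univ.erase j).erase i,
                  (bplEdgeExp θ p i j * w i * x i) * (bplEdgeExp θ p k j * w k * x k)
                    * (Real.exp (θ j)
                        / (Real.exp (θ i) + Real.exp (θ j) + Real.exp (θ k))))) := by
  calc _ = -(1 / 2) * Real.log (2 * Real.pi * σ ^ 2) * ∑ ω, bplProb θ p ω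
        + -(1 / 2) / σ ^ 2 * ∑ ω, bplProb θ p ω *
          (x j - (b + ∑ i ∈ Finset.univ.erase j, bplEdge i j ω * w i * x i)) ^ 2 := by
        rw [Finset.mul_sum, Finset.mul_sum, ← Finset.sum_add_distrib]
        exact Finset.sum_congr rfl fun ω _ => by ring
    _ = _ := by
        rw [sum_bplProb, sum_bplProb_mul_sq_residual]
        ring

/-- Expectation over the Bernoulli-Plackett-Luce model of the Gaussian
log-density `log N(x_j | μ_j, σ_j²)` with `μ_j = b_j + Σ_{i ≠ j} a_{ij} w_{ij} x_i`:
it equals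
`−½ [ log(2πσ_j²) + (1/σ_j²)( (x_j − b_j − Σ_{i≠j} E[a_{ij}] w_{ij} x_i)²
  + Σ_{i≠j} E[a_{ij}](1 − E[a_{ij}]) w_{ij}² x_i²
  + Σ_{i≠j} Σ_{k≠j,k≠i} (E[a_{ij}] w_{ij} x_i)(E[a_{kj}] w_{kj} x_k)
      e^{θ_j}/(e^{θ_i}+e^{θ_j}+e^{θ_k}) ) ]`. -/
theorem bpl_expected_gaussian_loglik {n : ℕ} (hn : 3 ≤ n) (θ : Fin n → ℝ)
    (p : Fin n → Fin n → ℝ) (hp : ∀ a b, 0 ≤ p a b ∧ p a b ≤ 1)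
    (j : Fin n) (x : Fin n → ℝ) (w : Fin n → ℝ) (b σ : ℝ) (hσ : 0 < σ) :
    (∑ ω : Equiv.Perm (Fin n) × (Fin n → Fin n → Bool),
        bplProb θ p ω *
          (-(1 / 2) * (Real.log (2 * Real.pi * σ ^ 2)
            + (x j - (b + ∑ i ∈ Finset.univ.erase j, bplEdge i j ω * w i * x i)) ^ 2
                / σ ^ 2)))
      = -(1 / 2) * (Real.log (2 * Real.pi * σ ^ 2)
          + (1 / σ ^ 2) *
            ((x j - b - ∑ i ∈ Finset.univ.erase j, bplEdgeExp θ p i j * w i * x i) ^ 2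
              + (∑ i ∈ Finset.univ.erase j,
                  bplEdgeExp θ p i j * (1 - bplEdgeExp θ p i j) * w i ^ 2 * x i ^ 2)
              + ∑ i ∈ Finset.univ.erase j, ∑ k ∈ (Finset.univ.erase j).erase i,
                  (bplEdgeExp θ p i j * w i * x i) * (bplEdgeExp θ p k j * w k * x k)
                    * (Real.exp (θ j)
                        / (Real.exp (θ i) + Real.exp (θ j) + Real.exp (θ k))))) :=
  bpl_expected_gaussian_loglik_general θ p j x w b σ
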